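/- Let Γ be a finite simple graph with vertex set X. A vertex x ∈ X is K-minimal if and only if [x] = 𝔞(x). Moreover, if x is K-minimal then: (i) x is L-minimal, and (ii) cl({y}) = [y]⊥ for all y ∈ 𝔞(x). -/

import Mathlib

namespace PCG

variable {X : Type*}

/-- The orthogonal complement of a set of vertices: all vertices at distance at
most one from every element of `Y`. -/
def perp (Γ : SimpleGraph X) (Y : Set X) : Set X :=
  {u | ∀ y ∈ Y, u = y ∨ Γ.Adj u y}

/-- The closure operator `cl(Y) = Y^⊥⊥`. -/
def cl (Γ : SimpleGraph X) (Y : Set X) : Set X :=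
  perp Γ (perp Γ Y)

/-- The admissible-set operator `𝔞(Y) = ⋂_{y ∈ Y} (y^⊥ \ {y})^⊥` (with `𝔞(∅) = X`). -/
def aSet (Γ : SimpleGraph X) (Y : Set X) : Set X :=
  ⋂ y ∈ Y, perp Γ (perp Γ {y} \ {y})

/-- A set is admissible if it is `𝔞(Y)` for some `Y`. -/
def IsAdmissible (Γ : SimpleGraph X) (A : Set X) : Prop :=
  ∃ Y : Set X, A = aSet Γ Y

/-- A set is closed if it equals its closure. -/
def IsClosedSet (Γ : SimpleGraph X) (Y : Set X) : Prop :=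
  Y = cl Γ Y

/-- `x` dominates `y` if `x^⊥ ∩ y^⊥ = y^⊥ \ {y}`. -/
def Dominates (Γ : SimpleGraph X) (x y : X) : Prop :=
  perp Γ {x} ∩ perp Γ {y} = perp Γ {y} \ {y}

/-- The set of dominated vertices. -/
def Dom (Γ : SimpleGraph X) : Set X :=
  {y | ∃ x, Dominates Γ x y}

/-- The `∼⊥`-equivalence class of `x`: vertices with the same star as `x`. -/
def perpClass (Γ : SimpleGraph X) (x : X) : Set X :=
  {y | perp Γ {y} = perp Γ {x}}

/-- The `∼◇`-equivalence class of `x`: vertices with the same link as `x`. -/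
def diaClass (Γ : SimpleGraph X) (x : X) : Set X :=
  {y | perp Γ {y} \ {y} = perp Γ {x} \ {x}}

/-- The `∼`-equivalence class `[x]`. -/
def simClass (Γ : SimpleGraph X) (x : X) : Set X :=
  perpClass Γ x ∪ diaClass Γ x

/-- The outer admissible set of `y`. -/
def out (Γ : SimpleGraph X) (y : X) : Set X :=
  {x | Dominates Γ x y ∧ simClass Γ x ≠ simClass Γ y}

/-- `C` is the vertex set of a connected component of the full subgraph of `Γ` on `S`. -/
def IsCompOf (Γ : SimpleGraph X) (S : Set X) (C : Set X) : Prop :=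
  ∃ K : (Γ.induce S).ConnectedComponent, C = Subtype.val '' K.supp

/-- Balanced graphs. -/
def Balanced (Γ : SimpleGraph X) : Prop :=
  ∀ v ∈ Dom Γ, out Γ v = ∅ ∨ ∃ C : Set X, IsCompOf Γ ((perp Γ {v})ᶜ) C ∧ out Γ v ⊆ C

/-- Relators of the partially commutative group: commutators of adjacent vertices. -/
def raagRels (Γ : SimpleGraph X) : Set (FreeGroup X) :=
  {w | ∃ x y : X, Γ.Adj x y ∧
    w = FreeGroup.of x * FreeGroup.of y * (FreeGroup.of x)⁻¹ * (FreeGroup.of y)⁻¹}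

/-- The partially commutative group (right-angled Artin group) of `Γ`. -/
abbrev RAAG (Γ : SimpleGraph X) : Type _ := PresentedGroup (raagRels Γ)

/-- The generator of `RAAG Γ` corresponding to a vertex. -/
def gen (Γ : SimpleGraph X) (x : X) : RAAG Γ := PresentedGroup.of x

/-- The canonical parabolic subgroup generated by a set of vertices. -/
def parab (Γ : SimpleGraph X) (Y : Set X) : Subgroup (RAAG Γ) :=
  Subgroup.closure (gen Γ '' Y)

/-- Conjugate of a subgroup: `H^f = f⁻¹ H f`. -/
def conjBy {G : Type*} [Group G] (H : Subgroup G) (f : G) : Subgroup G :=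
  Subgroup.map (MulAut.conj f⁻¹).toMonoidHom H

/-- Inversions. -/
def InvSet (Γ : SimpleGraph X) : Set (MulAut (RAAG Γ)) :=
  {φ | ∃ x : X, φ (gen Γ x) = (gen Γ x)⁻¹ ∧ ∀ y : X, y ≠ x → φ (gen Γ y) = gen Γ y}

/-- Transvections. -/
def TrSet (Γ : SimpleGraph X) : Set (MulAut (RAAG Γ)) :=
  {φ | ∃ x y : X, y ≠ x ∧
    (φ (gen Γ x) = gen Γ x * gen Γ y ∨ φ (gen Γ x) = (gen Γ y)⁻¹ * gen Γ x) ∧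
    ∀ z : X, z ≠ x → φ (gen Γ z) = gen Γ z}

/-- Elementary conjugating automorphisms. -/
def LInnSet (Γ : SimpleGraph X) : Set (MulAut (RAAG Γ)) :=
  {φ | ∃ (x : X) (C : Set X) (ε : ℤ), (ε = 1 ∨ ε = -1) ∧
    IsCompOf Γ ((perp Γ {x})ᶜ) C ∧
    (∀ u ∈ C, φ (gen Γ u) = (gen Γ x ^ ε)⁻¹ * gen Γ u * gen Γ x ^ ε) ∧
    (∀ u : X, u ∉ C → φ (gen Γ u) = gen Γ u)}

/-- The subgroup `Aut*(G)` generated by inversions, transvections and elementary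
conjugating automorphisms. -/
def AutStar (Γ : SimpleGraph X) : Subgroup (MulAut (RAAG Γ)) :=
  Subgroup.closure (InvSet Γ ∪ TrSet Γ ∪ LInnSet Γ)

/-- Basis-conjugating automorphisms. -/
def IsBasisConj (Γ : SimpleGraph X) (φ : MulAut (RAAG Γ)) : Prop :=
  ∀ x : X, ∃ g : RAAG Γ, φ (gen Γ x) = g⁻¹ * gen Γ x * g

/-- Normal conjugating automorphisms. -/
def IsConjN (Γ : SimpleGraph X) (φ : MulAut (RAAG Γ)) : Prop :=
  IsBasisConj Γ φ ∧
    ∀ x : X, ∃ f : RAAG Γ, ∀ z ∈ aSet Γ {x}, φ (gen Γ z) = f⁻¹ * gen Γ z * f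

/-- Vertex conjugating automorphisms. -/
def IsConjV (Γ : SimpleGraph X) (φ : MulAut (RAAG Γ)) : Prop :=
  IsBasisConj Γ φ ∧
    ∀ x : X, ∃ f : RAAG Γ, ∀ y ∈ simClass Γ x, φ (gen Γ y) = f⁻¹ * gen Γ y * f

/-- Membership in `St(K)`. -/
def IsStK (Γ : SimpleGraph X) (φ : MulAut (RAAG Γ)) : Prop :=
  ∀ A : Set X, IsAdmissible Γ A →
    Subgroup.map φ.toMonoidHom (parab Γ A) = parab Γ A

/-- Membership in `St(L)`. -/
def IsStL (Γ : SimpleGraph X) (φ : MulAut (RAAG Γ)) : Prop :=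
  ∀ A : Set X, IsClosedSet Γ A →
    Subgroup.map φ.toMonoidHom (parab Γ A) = parab Γ A

/-- Membership in `St^conj(K)`. -/
def IsStConjK (Γ : SimpleGraph X) (φ : MulAut (RAAG Γ)) : Prop :=
  ∀ A : Set X, IsAdmissible Γ A →
    ∃ f : RAAG Γ, Subgroup.map φ.toMonoidHom (parab Γ A) = conjBy (parab Γ A) f

/-- Aggregate conjugating automorphisms. -/
def AggrSet (Γ : SimpleGraph X) : Set (MulAut (RAAG Γ)) :=
  {φ | ∃ (x : X) (C : Set X), IsCompOf Γ ({x}ᶜ) C ∧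
    (∀ y ∈ C, φ (gen Γ y) = (gen Γ x)⁻¹ * gen Γ y * gen Γ x) ∧
    (∀ y : X, y ∉ C → φ (gen Γ y) = gen Γ y)}

/-- Elementary singular conjugating automorphisms: those `α_{C,x^ε}` with `C` a singleton. -/
def LInnSSet (Γ : SimpleGraph X) : Set (MulAut (RAAG Γ)) :=
  {φ | ∃ (x y : X) (ε : ℤ), (ε = 1 ∨ ε = -1) ∧
    IsCompOf Γ ((perp Γ {x})ᶜ) {y} ∧
    φ (gen Γ y) = (gen Γ x ^ ε)⁻¹ * gen Γ y * gen Γ x ^ ε ∧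
    ∀ u : X, u ≠ y → φ (gen Γ u) = gen Γ u}

/-- Basic collected conjugating automorphisms. -/
def LInnCSet (Γ : SimpleGraph X) : Set (MulAut (RAAG Γ)) :=
  {φ | ∃ x u : X, Dominates Γ x u ∧
    (∀ v ∈ simClass Γ u \ {x}, φ (gen Γ v) = (gen Γ x)⁻¹ * gen Γ v * gen Γ x) ∧
    (∀ v : X, v ∉ simClass Γ u \ {x} → φ (gen Γ v) = gen Γ v)}

/-- Regular elementary conjugating automorphisms. -/
def LInnRSet (Γ : SimpleGraph X) : Set (MulAut (RAAG Γ)) :=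
  (LInnSet Γ ∩ {φ | IsConjV Γ φ}) \ LInnSSet Γ

/-- Basic vertex conjugating automorphisms. -/
def LInnVSet (Γ : SimpleGraph X) : Set (MulAut (RAAG Γ)) :=
  LInnRSet Γ ∪ LInnCSet Γ

/-- Tame extended elementary conjugating automorphisms. -/
def LInnTSet (Γ : SimpleGraph X) : Set (MulAut (RAAG Γ)) :=
  {φ | ∃ (y : X) (L : Set X) (ε : ℤ), (ε = 1 ∨ ε = -1) ∧
    (∀ v ∈ L, ∃ C : Set X, IsCompOf Γ ((perp Γ {y})ᶜ) C ∧ v ∈ C ∧ C ⊆ L) ∧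
    aSet Γ {y} ∩ L = ∅ ∧
    (∀ u ∈ L, φ (gen Γ u) = (gen Γ y ^ ε)⁻¹ * gen Γ u * gen Γ y ^ ε) ∧
    (∀ u : X, u ∉ L → φ (gen Γ u) = gen Γ u)}

/-- `K`-minimal vertices. -/
def KMin (Γ : SimpleGraph X) (x : X) : Prop :=
  ∀ y : X, aSet Γ {y} ⊆ aSet Γ {x} → aSet Γ {y} = aSet Γ {x}

/-- `L`-minimal vertices. -/
def LMin (Γ : SimpleGraph X) (x : X) : Prop :=
  ∀ y : X, cl Γ {y} ⊆ cl Γ {x} → cl Γ {y} = cl Γ {x}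

end PCG

/-! The whole argument rests on reading `u ∈ 𝔞(x)` as "the link `x^⊥ \ {x}` lies in the star
`u^⊥`". This relation is transitive, so `𝔞(y) ⊆ 𝔞(x)` for `y ∈ 𝔞(x)`, and two vertices lying in
each other's `𝔞`-set have equal stars (if they are equal or adjacent) or equal links (otherwise).
Hence `x` is `K`-minimal exactly when `𝔞(x)` is the single class `[x]`, and then every `y ∈ 𝔞(x)`
is `K`-minimal too. Finally `cl({y}) ⊆ 𝔞(y) = [y]`, and a `∼◇`-twin `u ≠ y` of `y` cannot lie in
`cl({y})`, since `y` would then be in the link of `u`, which is the link of `y`. -/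

namespace PCG

section

variable {X : Type*} {Γ : SimpleGraph X} {u x y : X}

lemma mem_perp_singleton : u ∈ perp Γ {y} ↔ u = y ∨ Γ.Adj u y := by
  simp [perp]

lemma mem_perp_iff_subset {Y : Set X} : u ∈ perp Γ Y ↔ Y ⊆ perp Γ {u} := by
  simp only [perp, Set.subset_def, Set.mem_ofPred_eq, Set.mem_singleton_iff, forall_eq,
    eq_comm (a := u), Γ.adj_comm u]

lemma mem_perp_singleton_comm : u ∈ perp Γ {y} ↔ y ∈ perp Γ {u} := by
  rw [mem_perp_iff_subset, Set.singleton_subset_iff]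

lemma self_mem_perp_singleton : y ∈ perp Γ {y} :=
  mem_perp_singleton.2 (Or.inl rfl)

lemma perp_singleton_subset_of_diff_subset (hlink : perp Γ {x} \ {x} ⊆ perp Γ {y})
    (hxy : x ∈ perp Γ {y}) : perp Γ {x} ⊆ perp Γ {y} := by
  intro w hw
  by_cases hwx : w = x
  · exact hwx ▸ hxy
  · exact hlink ⟨hw, hwx⟩

lemma diff_subset_diff_of_diff_subset (hlink : perp Γ {x} \ {x} ⊆ perp Γ {y})
    (hxy : x ∉ perp Γ {y}) : perp Γ {x} \ {x} ⊆ perp Γ {y} \ {y} := by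
  rintro w ⟨hw, hwx⟩
  refine ⟨hlink ⟨hw, hwx⟩, ?_⟩
  rintro rfl
  exact hxy (mem_perp_singleton_comm.1 hw)

lemma mem_aSet_singleton : u ∈ aSet Γ {x} ↔ perp Γ {x} \ {x} ⊆ perp Γ {u} := by
  simp only [aSet, Set.mem_singleton_iff, Set.iInter_iInter_eq_left, mem_perp_iff_subset]

lemma mem_cl_singleton : u ∈ cl Γ {y} ↔ perp Γ {y} ⊆ perp Γ {u} :=
  mem_perp_iff_subset

lemma self_mem_aSet_singleton : x ∈ aSet Γ {x} :=
  mem_aSet_singleton.2 Set.sdiff_subset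

lemma cl_singleton_subset_aSet : cl Γ {y} ⊆ aSet Γ {y} := fun _ hu =>
  mem_aSet_singleton.2 (Set.sdiff_subset.trans (mem_cl_singleton.1 hu))

lemma perpClass_subset_cl_singleton : perpClass Γ y ⊆ cl Γ {y} := fun _ hu =>
  mem_cl_singleton.2 (hu : perp Γ {_} = perp Γ {y}).ge

lemma aSet_singleton_subset_of_mem (hy : y ∈ aSet Γ {x}) : aSet Γ {y} ⊆ aSet Γ {x} := by
  intro u hu
  rw [mem_aSet_singleton] at hy hu ⊢
  rintro w ⟨hw, hwx⟩
  by_cases hwy : w = y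
  · subst hwy
    -- `x` lies in the link of `w`, so `u` lies in the star of `x`
    have hxw : x ∈ perp Γ {w} \ {w} := ⟨mem_perp_singleton_comm.1 hw, Ne.symm hwx⟩
    rcases mem_perp_singleton.1 (mem_perp_singleton_comm.1 (hu hxw)) with rfl | hux
    · exact hw
    · exact mem_perp_singleton_comm.1
        (hy ⟨mem_perp_singleton.2 (Or.inr hux), hux.ne⟩)
  · exact hu ⟨hy ⟨hw, hwx⟩, hwy⟩

lemma mem_simClass_comm : y ∈ simClass Γ x ↔ x ∈ simClass Γ y :=
  ⟨Or.imp Eq.symm Eq.symm, Or.imp Eq.symm Eq.symm⟩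

lemma simClass_subset_aSet : simClass Γ x ⊆ aSet Γ {x} := by
  rintro y (hy | hy) <;> rw [mem_aSet_singleton]
  · exact (hy : perp Γ {y} = perp Γ {x}) ▸ Set.sdiff_subset
  · exact (hy : perp Γ {y} \ {y} = perp Γ {x} \ {x}) ▸ Set.sdiff_subset

lemma mem_simClass_of_mem_aSet_of_mem_aSet (hxy : y ∈ aSet Γ {x}) (hyx : x ∈ aSet Γ {y}) :
    y ∈ simClass Γ x := by
  rw [mem_aSet_singleton] at hxy hyx
  by_cases h : x ∈ perp Γ {y}
  · exact Or.inl <| (perp_singleton_subset_of_diff_subset hxy h).antisymm'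
      (perp_singleton_subset_of_diff_subset hyx (mem_perp_singleton_comm.1 h))
  · exact Or.inr <| (diff_subset_diff_of_diff_subset hxy h).antisymm'
      (diff_subset_diff_of_diff_subset hyx (mt mem_perp_singleton_comm.1 h))

lemma eq_of_mem_cl_singleton_of_mem_diaClass (hu : u ∈ cl Γ {y}) (hdia : u ∈ diaClass Γ y) :
    u = y := by
  by_contra hne
  have hy : y ∈ perp Γ {u} \ {u} := ⟨mem_cl_singleton.1 hu self_mem_perp_singleton, Ne.symm hne⟩
  rw [(hdia : perp Γ {u} \ {u} = perp Γ {y} \ {y})] at hy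
  exact hy.2 rfl

theorem kMin_iff_simClass_eq_aSet : KMin Γ x ↔ simClass Γ x = aSet Γ {x} := by
  constructor
  · intro hK
    refine simClass_subset_aSet.antisymm fun y hy => ?_
    have hx : x ∈ aSet Γ {y} := hK y (aSet_singleton_subset_of_mem hy) ▸ self_mem_aSet_singleton
    exact mem_simClass_of_mem_aSet_of_mem_aSet hy hx
  · intro hEq y hy
    have hyx : y ∈ simClass Γ x := hEq ▸ hy self_mem_aSet_singleton
    exact hy.antisymm
      (aSet_singleton_subset_of_mem (simClass_subset_aSet (mem_simClass_comm.1 hyx)))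

lemma kMin_of_mem_aSet (hK : KMin Γ x) (hy : y ∈ aSet Γ {x}) : KMin Γ y := by
  intro z hz
  rw [hK y (aSet_singleton_subset_of_mem hy)] at hz ⊢
  exact hK z hz

lemma cl_singleton_eq_perpClass_of_kMin (hK : KMin Γ y) : cl Γ {y} = perpClass Γ y := by
  refine Set.Subset.antisymm (fun u hu => ?_) perpClass_subset_cl_singleton
  rcases (kMin_iff_simClass_eq_aSet.1 hK).symm ▸ cl_singleton_subset_aSet hu with hperp | hdia
  · exact hperp
  · exact eq_of_mem_cl_singleton_of_mem_diaClass hu hdia ▸ rfl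

lemma lMin_of_cl_singleton_eq_perpClass (h : cl Γ {x} = perpClass Γ x) : LMin Γ x := by
  intro z hz
  have hzx : perp Γ {z} = perp Γ {x} := (h ▸ hz) (mem_cl_singleton.2 subset_rfl)
  rw [cl, cl, hzx]

end

theorem kMin_characterisation_general {X : Type*} (Γ : SimpleGraph X) (x : X) :
    (KMin Γ x ↔ simClass Γ x = aSet Γ {x}) ∧
    (KMin Γ x → LMin Γ x ∧ ∀ y ∈ aSet Γ {x}, cl Γ {y} = perpClass Γ y) :=
  ⟨kMin_iff_simClass_eq_aSet, fun hK =>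
    ⟨lMin_of_cl_singleton_eq_perpClass (cl_singleton_eq_perpClass_of_kMin hK),
      fun _ hy => cl_singleton_eq_perpClass_of_kMin (kMin_of_mem_aSet hK hy)⟩⟩

/-- `x` is `K`-minimal iff `[x] = 𝔞(x)`; moreover a `K`-minimal
vertex is `L`-minimal and `cl({y}) = [y]⊥` for all `y ∈ 𝔞(x)`. -/
theorem kMin_characterisation {X : Type*} [Fintype X] (Γ : SimpleGraph X) (x : X) :
    (KMin Γ x ↔ simClass Γ x = aSet Γ {x}) ∧
    (KMin Γ x → LMin Γ x ∧ ∀ y ∈ aSet Γ {x}, cl Γ {y} = perpClass Γ y) :=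
  kMin_characterisation_general Γ x

end PCG
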